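/- Let A be an associative unital κ-algebra with center Z and let (B_i)_{i≥0} be a formal deformation of A, with bracket {a,b} := B_1(a,b) − B_1(b,a). Then the curvature of the induced bracket is inner and given by the second-order term: for all f, g ∈ Z and a ∈ A, {{f,g}, a} − {f, {g,a}} + {g, {f,a}} = [a, B_2(f,g) − B_2(g,f)]. -/
import Mathlib

/-- The first-order bracket `{a,b} := B₁(a,b) − B₁(b,a)` of a formal deformation. -/
def deformationBracket {κ : Type*} [Field κ] {A : Type*} [Ring A] [Algebra κ A]
    (B : ℕ → A →ₗ[κ] A →ₗ[κ] A) (a b : A) : A :=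
  B 1 a b - B 1 b a

/-- For a formal deformation `(B_i)` of `A` with bracket
`{a,b} := B₁(a,b) − B₁(b,a)`, the curvature of the induced bracket is inner and
given by the second-order term: for `f, g ∈ Z` and `a ∈ A`,
`{{f,g}, a} − {f, {g,a}} + {g, {f,a}} = [a, B₂(f,g) − B₂(g,f)]`. -/
theorem deformation_bracket_curvature_inner
    (κ : Type*) [Field κ] [CharZero κ]
    (A : Type*) [Ring A] [Algebra κ A]
    (B : ℕ → A →ₗ[κ] A →ₗ[κ] A)
    (hB0 : ∀ a b : A, B 0 a b = a * b)
    (hassoc : ∀ (n : ℕ) (a b c : A),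
      ∑ i ∈ Finset.range (n + 1), B i (B (n - i) a b) c
        = ∑ i ∈ Finset.range (n + 1), B i a (B (n - i) b c)) :
    ∀ f g : A, f ∈ Subalgebra.center κ A → g ∈ Subalgebra.center κ A → ∀ a : A,
      deformationBracket B (deformationBracket B f g) a
          - deformationBracket B f (deformationBracket B g a)
          + deformationBracket B g (deformationBracket B f a)
        = a * (B 2 f g - B 2 g f) - (B 2 f g - B 2 g f) * a := by
  have key : ∀ a b c : A, B 1 (B 1 a b) c - B 1 a (B 1 b c)
      = a * B 2 b c + B 2 a (b * c) - B 2 a b * c - B 2 (a * b) c := by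
    intro a b c
    have h2 := hassoc 2 a b c
    simp only [Finset.sum_range_succ, Finset.sum_range_zero, zero_add] at h2
    norm_num at h2
    rw [hB0, hB0, hB0, hB0] at h2
    linear_combination (norm := noncomm_ring) h2
  intro f g hf hg a
  rw [Subalgebra.mem_center_iff] at hf hg
  have e1 := key f g a
  have e2 := key g f a
  have e3 := key a f g
  have e4 := key a g f
  have e5 := key f a g
  have e6 := key g a f
  have c1 : B 2 f (a * g) = B 2 f (g * a) := by rw [hg a]
  have c2 : B 2 g (a * f) = B 2 g (f * a) := by rw [hf a]
  have c3 : B 2 a (g * f) = B 2 a (f * g) := by rw [hf g]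
  have c4 : B 2 (g * f) a = B 2 (f * g) a := by rw [hf g]
  have c5 : B 2 (a * f) g = B 2 (f * a) g := by rw [hf a]
  have c6 : B 2 (a * g) f = B 2 (g * a) f := by rw [hg a]
  simp only [deformationBracket, map_sub, LinearMap.sub_apply]
  linear_combination (norm := noncomm_ring) e1 - e2 + e3 - e4 - e5 + e6
    - hf (B 2 g a) + hg (B 2 f a) - hg (B 2 a f) + hf (B 2 a g)
    - c1 + c2 - c3 + c4 - c5 + c6
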